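/- arXiv:2207.00786 — 4 statements merged into one kernel-verified Lean document; each statement's English description precedes it below -/
import Mathlib

section
/- With K, h, w_j as above, for every t ∈ [0,1] and j = 0,1,2,3 one has |w_j(t)| ≤ (1/2)^{j-2⌊j/2⌋} κ_j h^j, where κ_j = ∫_{-1}^1 |u|^j K(u) du; i.e., |w_j(t)| ≤ κ_j h^j for even j and |w_j(t)| ≤ κ_j h^j / 2 for odd j, and these bounds are attained (the supremum over t equals the stated value). -/
open MeasureTheory

namespace Stmt3Aux

noncomputable def G (K : ℝ → ℝ) (j : ℕ) (x : ℝ) : ℝ := ∫ y in (0:ℝ)..x, y ^ j * K y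

variable {K : ℝ → ℝ} {j : ℕ}

lemma intK (hc : Continuous K) (j : ℕ) (a b : ℝ) :
    IntervalIntegrable (fun y => y ^ j * K y) volume a b :=
  ((continuous_pow j).mul hc).intervalIntegrable a b

lemma G_sub (hc : Continuous K) (a b : ℝ) :
    G K j b - G K j a = ∫ y in a..b, y ^ j * K y := by
  have := intervalIntegral.integral_add_adjacent_intervals (intK hc j 0 a) (intK hc j a b)
  unfold G
  linarith

lemma G_one_nonneg (hc : Continuous K) (hKnonneg : ∀ t, 0 ≤ K t) : 0 ≤ G K j 1 := by
  refine intervalIntegral.integral_nonneg zero_le_one fun u hu => ?_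
  exact mul_nonneg (pow_nonneg hu.1 j) (hKnonneg u)

lemma G_mono_nonneg (hc : Continuous K) (hKnonneg : ∀ t, 0 ≤ K t) {a b : ℝ}
    (ha : 0 ≤ a) (hab : a ≤ b) : G K j a ≤ G K j b := by
  have h0 : 0 ≤ ∫ y in a..b, y ^ j * K y := by
    refine intervalIntegral.integral_nonneg hab fun u hu => ?_
    exact mul_nonneg (pow_nonneg (ha.trans hu.1) j) (hKnonneg u)
  have := G_sub (K := K) (j := j) hc a b
  linarith

lemma G_mono_even (hc : Continuous K) (hKnonneg : ∀ t, 0 ≤ K t) (hj : Even j) {a b : ℝ}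
    (hab : a ≤ b) : G K j a ≤ G K j b := by
  have h0 : 0 ≤ ∫ y in a..b, y ^ j * K y := by
    refine intervalIntegral.integral_nonneg hab fun u hu => ?_
    exact mul_nonneg (hj.pow_nonneg u) (hKnonneg u)
  have := G_sub (K := K) (j := j) hc a b
  linarith

lemma G_of_one_le (hc : Continuous K) (hKsupp : ∀ t, t ∉ Set.Icc (-1 : ℝ) 1 → K t = 0)
    (hK1 : K 1 = 0) {x : ℝ} (hx : 1 ≤ x) : G K j x = G K j 1 := by
  have h0 : (∫ y in (1:ℝ)..x, y ^ j * K y) = 0 := by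
    rw [intervalIntegral.integral_congr (g := fun _ => (0:ℝ)) ?_, intervalIntegral.integral_zero]
    intro y hy
    rw [Set.uIcc_of_le hx] at hy
    rcases eq_or_lt_of_le hy.1 with h1 | h1
    · simp [← h1, hK1]
    · have : K y = 0 := hKsupp y (by simp [Set.mem_Icc]; intro _; linarith)
      simp [this]
  have := G_sub (K := K) (j := j) hc 1 x
  linarith

lemma G_of_le_neg_one (hc : Continuous K) (hKsupp : ∀ t, t ∉ Set.Icc (-1 : ℝ) 1 → K t = 0)
    (hKm1 : K (-1) = 0) {x : ℝ} (hx : x ≤ -1) : G K j x = G K j (-1) := by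
  have h0 : (∫ y in x..(-1:ℝ), y ^ j * K y) = 0 := by
    rw [intervalIntegral.integral_congr (g := fun _ => (0:ℝ)) ?_, intervalIntegral.integral_zero]
    intro y hy
    rw [Set.uIcc_of_le hx] at hy
    rcases eq_or_lt_of_le hy.2 with h1 | h1
    · simp [h1, hKm1]
    · have : K y = 0 := hKsupp y (by simp [Set.mem_Icc]; intro h'; linarith)
      simp [this]
  have := G_sub (K := K) (j := j) hc x (-1)
  linarith

lemma G_neg (hKsym : ∀ t, K t = K (-t)) (x : ℝ) :
    G K j (-x) = -((-1 : ℝ) ^ j * G K j x) := by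
  have h1 : (∫ y in (0:ℝ)..x, (fun y => y ^ j * K y) (-y)) =
      ∫ y in (-x)..(0:ℝ), y ^ j * K y := by
    rw [intervalIntegral.integral_comp_neg (fun y => y ^ j * K y)]
    norm_num
  have h2 : (∫ y in (0:ℝ)..x, (fun y => y ^ j * K y) (-y)) =
      (-1 : ℝ) ^ j * ∫ y in (0:ℝ)..x, y ^ j * K y := by
    rw [← intervalIntegral.integral_const_mul]
    refine intervalIntegral.integral_congr fun y _ => ?_
    simp only
    rw [← hKsym y, neg_pow]
    ring
  have h3 : (∫ y in (0:ℝ)..(-x), y ^ j * K y) = -∫ y in (-x)..(0:ℝ), y ^ j * K y :=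
    intervalIntegral.integral_symm _ _
  unfold G
  rw [h3, ← h1, h2]

lemma G_bounds_odd (hc : Continuous K) (hKnonneg : ∀ t, 0 ≤ K t)
    (hKsym : ∀ t, K t = K (-t)) (hKsupp : ∀ t, t ∉ Set.Icc (-1 : ℝ) 1 → K t = 0)
    (hK1 : K 1 = 0) (hj : Odd j) (s : ℝ) : 0 ≤ G K j s ∧ G K j s ≤ G K j 1 := by
  have key : ∀ x : ℝ, 0 ≤ x → 0 ≤ G K j x ∧ G K j x ≤ G K j 1 := by
    intro x hx
    constructor
    · have := G_mono_nonneg (K := K) (j := j) hc hKnonneg le_rfl hx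
      simpa [G] using this
    · rcases le_or_gt x 1 with h1 | h1
      · exact G_mono_nonneg hc hKnonneg hx h1
      · exact le_of_eq (G_of_one_le hc hKsupp hK1 h1.le)
  rcases le_or_gt 0 s with hs | hs
  · exact key s hs
  · have hGeq : G K j s = G K j (-s) := by
      have := G_neg (K := K) (j := j) hKsym (-s)
      rw [neg_neg] at this
      rw [this, Odd.neg_one_pow hj]
      ring
    rw [hGeq]
    exact key (-s) (by linarith)

lemma G_bounds_even (hc : Continuous K) (hKnonneg : ∀ t, 0 ≤ K t)
    (hKsym : ∀ t, K t = K (-t)) (hKsupp : ∀ t, t ∉ Set.Icc (-1 : ℝ) 1 → K t = 0)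
    (hK1 : K 1 = 0) (hKm1 : K (-1) = 0) (hj : Even j) (s : ℝ) :
    -(G K j 1) ≤ G K j s ∧ G K j s ≤ G K j 1 := by
  have hGm1 : G K j (-1) = -(G K j 1) := by
    have := G_neg (K := K) (j := j) hKsym 1
    rw [this, Even.neg_one_pow hj]; ring
  constructor
  · rcases le_or_gt s (-1) with h1 | h1
    · rw [G_of_le_neg_one hc hKsupp hKm1 h1, hGm1]
    · rw [← hGm1]; exact G_mono_even hc hKnonneg hj h1.le
  · rcases le_or_gt s 1 with h1 | h1
    · exact G_mono_even hc hKnonneg hj h1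
    · exact le_of_eq (G_of_one_le hc hKsupp hK1 h1.le)

/-- κ_j = 2 G_j(1). -/
lemma kappa_eq (hc : Continuous K) (hKsym : ∀ t, K t = K (-t)) (j : ℕ) :
    (∫ u in Set.Icc (-1 : ℝ) 1, |u| ^ j * K u) = 2 * G K j 1 := by
  have hg : Continuous fun u : ℝ => |u| ^ j * K u := (continuous_abs.pow j).mul hc
  have h1 : (∫ u in Set.Icc (-1 : ℝ) 1, |u| ^ j * K u)
      = ∫ u in (-1 : ℝ)..1, |u| ^ j * K u := by
    rw [MeasureTheory.integral_Icc_eq_integral_Ioc,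
      ← intervalIntegral.integral_of_le (by norm_num : (-1:ℝ) ≤ 1)]
  have hsplit : (∫ u in (-1 : ℝ)..1, |u| ^ j * K u)
      = (∫ u in (-1 : ℝ)..0, |u| ^ j * K u) + ∫ u in (0 : ℝ)..1, |u| ^ j * K u :=
    (intervalIntegral.integral_add_adjacent_intervals (hg.intervalIntegrable _ _)
      (hg.intervalIntegrable _ _)).symm
  have hneg : (∫ u in (-1 : ℝ)..0, |u| ^ j * K u) = ∫ u in (0 : ℝ)..1, |u| ^ j * K u := by
    have := intervalIntegral.integral_comp_neg (a := (0:ℝ)) (b := 1)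
      (fun u => |u| ^ j * K u)
    rw [neg_zero] at this
    rw [← this]
    refine intervalIntegral.integral_congr fun u _ => ?_
    simp only [abs_neg]
    rw [← hKsym u]
  have hpos : (∫ u in (0 : ℝ)..1, |u| ^ j * K u) = G K j 1 := by
    refine intervalIntegral.integral_congr fun u hu => ?_
    rw [Set.uIcc_of_le zero_le_one] at hu
    rw [abs_of_nonneg hu.1]
  rw [h1, hsplit, hneg, hpos]
  ring

/-- Change of variables: w_j(t) = h^j (G(t/h) - G((t-1)/h)). -/
lemma w_eq (hc : Continuous K) {h : ℝ} (hne : h ≠ 0) (j : ℕ) (t : ℝ) :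
    (∫ z in Set.Icc (0 : ℝ) 1, (t - z) ^ j * (K ((t - z) / h) / h))
      = h ^ j * (G K j (t / h) - G K j ((t - 1) / h)) := by
  have step1 : (∫ z in Set.Icc (0 : ℝ) 1, (t - z) ^ j * (K ((t - z) / h) / h))
      = ∫ s in (t - 1)..t, s ^ j * (K (s / h) / h) := by
    rw [MeasureTheory.integral_Icc_eq_integral_Ioc,
      ← intervalIntegral.integral_of_le (zero_le_one)]
    have := intervalIntegral.integral_comp_sub_left (a := (0:ℝ)) (b := 1)
      (fun s => s ^ j * (K (s / h) / h)) t
    rw [sub_zero] at this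
    exact this
  have step2 : (∫ s in (t - 1)..t, s ^ j * (K (s / h) / h))
      = ∫ s in (t - 1)..t, (fun y => (h * y) ^ j * (K y / h)) (s / h) := by
    refine intervalIntegral.integral_congr fun s _ => ?_
    simp only
    rw [mul_div_cancel₀ _ hne]
  have step3 : (∫ s in (t - 1)..t, (fun y => (h * y) ^ j * (K y / h)) (s / h))
      = h • ∫ y in (t - 1) / h..t / h, (h * y) ^ j * (K y / h) :=
    intervalIntegral.integral_comp_div (f := fun y => (h * y) ^ j * (K y / h)) hne
  have step4 : h • (∫ y in (t - 1) / h..t / h, (h * y) ^ j * (K y / h))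
      = h ^ j * ∫ y in (t - 1) / h..t / h, y ^ j * K y := by
    rw [smul_eq_mul, ← intervalIntegral.integral_const_mul, ← intervalIntegral.integral_const_mul]
    refine intervalIntegral.integral_congr fun y _ => ?_
    rw [mul_pow]
    field_simp
  rw [step1, step2, step3, step4, ← G_sub hc]

lemma main_core (hc : Continuous K) (hKnonneg : ∀ t, 0 ≤ K t)
    (hKsym : ∀ t, K t = K (-t)) (hKsupp : ∀ t, t ∉ Set.Icc (-1 : ℝ) 1 → K t = 0)
    (hK1 : K 1 = 0) (hKm1 : K (-1) = 0)
    {h : ℝ} (hh : h ∈ Set.Ioo (0 : ℝ) (1 / 2)) (j : ℕ) :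
    IsGreatest
      ((fun t => |∫ z in Set.Icc (0 : ℝ) 1, (t - z) ^ j * (K ((t - z) / h) / h)|) ''
        Set.Icc (0 : ℝ) 1)
      (if Even j then 2 * G K j 1 * h ^ j else G K j 1 * h ^ j) := by
  obtain ⟨hh0, hh2⟩ := hh
  have hne : h ≠ 0 := ne_of_gt hh0
  have hG1 : 0 ≤ G K j 1 := G_one_nonneg hc hKnonneg
  have hjpow : 0 < h ^ j := pow_pos hh0 j
  by_cases hj : Even j
  · rw [if_pos hj]
    have hGm1 : G K j (-1) = -(G K j 1) := by
      have := G_neg (K := K) (j := j) hKsym 1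
      rw [this, Even.neg_one_pow hj]; ring
    constructor
    · refine ⟨1/2, by norm_num, ?_⟩
      simp only
      rw [w_eq hc hne]
      have h1 : (1:ℝ)/2 / h ≥ 1 := by rw [ge_iff_le, le_div_iff₀ hh0]; linarith
      have h2 : ((1:ℝ)/2 - 1) / h ≤ -1 := by rw [div_le_iff₀ hh0]; linarith
      rw [G_of_one_le hc hKsupp hK1 h1, G_of_le_neg_one hc hKsupp hKm1 h2, hGm1]
      rw [abs_of_nonneg (by nlinarith [hjpow.le])]
      ring
    · rintro v ⟨t, ht, rfl⟩
      simp only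
      rw [w_eq hc hne]
      have b1 := G_bounds_even hc hKnonneg hKsym hKsupp hK1 hKm1 hj (t / h)
      have b2 := G_bounds_even hc hKnonneg hKsym hKsupp hK1 hKm1 hj ((t - 1) / h)
      have habs : |G K j (t / h) - G K j ((t - 1) / h)| ≤ 2 * G K j 1 :=
        abs_sub_le_iff.mpr ⟨by linarith [b1.1, b1.2, b2.1, b2.2],
          by linarith [b1.1, b1.2, b2.1, b2.2]⟩
      rw [abs_mul, abs_of_nonneg hjpow.le]
      nlinarith [abs_nonneg (G K j (t / h) - G K j ((t - 1) / h)), hjpow.le]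
  · rw [if_neg hj]
    have hjo : Odd j := Nat.odd_iff.mpr (Nat.even_or_odd j |>.resolve_left hj |> Nat.odd_iff.mp)
    constructor
    · refine ⟨0, by norm_num, ?_⟩
      simp only
      rw [w_eq hc hne]
      have hG0 : G K j ((0:ℝ) / h) = 0 := by
        rw [zero_div]; simp [G]
      have h2 : ((0:ℝ) - 1) / h ≤ -1 := by rw [div_le_iff₀ hh0]; linarith
      rw [hG0, G_of_le_neg_one hc hKsupp hKm1 h2]
      have hGm1 : G K j (-1) = G K j 1 := by
        have := G_neg (K := K) (j := j) hKsym 1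
        rw [this, Odd.neg_one_pow hjo]; ring
      rw [hGm1]
      rw [show h ^ j * (0 - G K j 1) = -(G K j 1 * h ^ j) by ring, abs_neg,
        abs_of_nonneg (by positivity)]
    · rintro v ⟨t, ht, rfl⟩
      simp only
      rw [w_eq hc hne]
      have b1 := G_bounds_odd hc hKnonneg hKsym hKsupp hK1 hjo (t / h)
      have b2 := G_bounds_odd hc hKnonneg hKsym hKsupp hK1 hjo ((t - 1) / h)
      have habs : |G K j (t / h) - G K j ((t - 1) / h)| ≤ G K j 1 :=
        abs_sub_le_iff.mpr ⟨by linarith [b1.1, b1.2, b2.1, b2.2],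
          by linarith [b1.1, b1.2, b2.1, b2.2]⟩
      rw [abs_mul, abs_of_nonneg hjpow.le]
      nlinarith [abs_nonneg (G K j (t / h) - G K j ((t - 1) / h)), hjpow.le]

end Stmt3Aux

/-- For `j = 0,1,2,3`, `|w_j(t)| ≤ (1/2)^{j-2⌊j/2⌋} κ_j h^j` on `[0,1]`, and the
supremum over `t ∈ [0,1]` of `|w_j(t)|` equals (and is attained at) this value. -/
theorem stmt_3 (K : ℝ → ℝ) (L : ℝ) (hL : 1 ≤ L)
    (hKlip : ∀ x y, |K x - K y| ≤ L * |x - y|)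
    (hKnonneg : ∀ t, 0 ≤ K t)
    (hKsym : ∀ t, K t = K (-t))
    (hKsupp : ∀ t, t ∉ Set.Icc (-1 : ℝ) 1 → K t = 0)
    (hKint : ∫ t in Set.Icc (-1 : ℝ) 1, K t = 1)
    (hK1 : K 1 = 0) (hKm1 : K (-1) = 0)
    (h : ℝ) (hh : h ∈ Set.Ioo (0 : ℝ) (1 / 2)) :
    ∀ j ≤ 3,
      IsGreatest
        ((fun t => |∫ z in Set.Icc (0 : ℝ) 1, (t - z) ^ j * (K ((t - z) / h) / h)|) ''
          Set.Icc (0 : ℝ) 1)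
        ((1 / 2 : ℝ) ^ (j - 2 * (j / 2)) * (∫ u in Set.Icc (-1 : ℝ) 1, |u| ^ j * K u) * h ^ j) := by
  have hc : Continuous K := by
    have : LipschitzWith (Real.toNNReal L) K := by
      rw [lipschitzWith_iff_dist_le_mul]
      intro x y
      rw [Real.dist_eq, Real.dist_eq, Real.coe_toNNReal L (by linarith)]
      exact hKlip x y
    exact this.continuous
  intro j hj
  have key := Stmt3Aux.main_core hc hKnonneg hKsym hKsupp hK1 hKm1 hh j
  have hkap := Stmt3Aux.kappa_eq hc hKsym j
  interval_cases j
  · rw [if_pos (by decide)] at key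
    convert key using 1
    rw [hkap]; norm_num
  · rw [if_neg (by decide)] at key
    convert key using 1
    rw [hkap]; norm_num
    exact Or.inl (by ring)
  · rw [if_pos (by decide)] at key
    convert key using 1
    rw [hkap]; norm_num
  · rw [if_neg (by decide)] at key
    convert key using 1
    rw [hkap]; norm_num
    exact Or.inl (by ring)
end

section
/- With K, h, w_j as above, inf_{t∈[0,1]} w₀(t) = 1/2 and inf_{t∈[0,1]} (w₀(t)w₂(t) - w₁(t)²) = (1/4)(κ₂ - κ₁²)h², where κ_j = ∫_{-1}^1 |u|^j K(u) du. -/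
/-!
After the substitution `u = (t - z) / h`, `w j t = h ^ j * ∫ u in (t - 1) / h..t / h, u ^ j * K u`,
so `w 0` is the `K`-mass of the window `[(t - 1) / h, t / h]` and `w 0 * w 2 - w 1 ^ 2` is `h ^ 2`
times the Gram determinant of `1, u` for the weight `K` on that window. Both grow with the interval:
the mass because `K ≥ 0`, the determinant because the Gram matrices of adjacent intervals add and
`det (P + Q) ≥ det P` for positive semidefinite `2 × 2` matrices. Since `h < 1 / 2`, every window
contains `[-1, 0]` or `[0, 1]`, which by evenness give the same values, namely those at `t = 0`.
-/

open MeasureTheory Set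

noncomputable def intervalMoment (K : ℝ → ℝ) (j : ℕ) (a b : ℝ) : ℝ := ∫ u in a..b, u ^ j * K u

noncomputable def momentDet (K : ℝ → ℝ) (a b : ℝ) : ℝ :=
  intervalMoment K 0 a b * intervalMoment K 2 a b - intervalMoment K 1 a b ^ 2

lemma mul_sub_sq_le_add_of_psd {p₀ p₁ p₂ q₀ q₁ q₂ : ℝ} (hp₀ : 0 ≤ p₀) (hp₂ : 0 ≤ p₂)
    (hp : p₁ ^ 2 ≤ p₀ * p₂) (hq₀ : 0 ≤ q₀) (hq₂ : 0 ≤ q₂) (hq : q₁ ^ 2 ≤ q₀ * q₂) :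
    p₀ * p₂ - p₁ ^ 2 ≤ (p₀ + q₀) * (p₂ + q₂) - (p₁ + q₁) ^ 2 := by
  have hprod : (p₁ * q₁) ^ 2 ≤ (p₀ * q₂) * (q₀ * p₂) := by
    nlinarith [mul_le_mul hp hq (sq_nonneg _) (mul_nonneg hp₀ hp₂)]
  have hcross : 2 * (p₁ * q₁) ≤ p₀ * q₂ + q₀ * p₂ := by
    nlinarith [sq_nonneg (p₀ * q₂ - q₀ * p₂), mul_nonneg hp₀ hq₂, mul_nonneg hq₀ hp₂]
  nlinarith

section
variable {K : ℝ → ℝ}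

lemma intervalIntegrable_pow_mul (hK : Integrable K) (j : ℕ) (a b : ℝ) :
    IntervalIntegrable (fun u => u ^ j * K u) volume a b :=
  hK.intervalIntegrable.continuousOn_mul (continuous_pow j).continuousOn

lemma intervalMoment_add_adjacent (hK : Integrable K) (j : ℕ) (a b c : ℝ) :
    intervalMoment K j a b + intervalMoment K j b c = intervalMoment K j a c :=
  intervalIntegral.integral_add_adjacent_intervals (intervalIntegrable_pow_mul hK j a b)
    (intervalIntegrable_pow_mul hK j b c)

lemma intervalMoment_nonneg (hKnonneg : 0 ≤ K) {j : ℕ} (hj : Even j) {a b : ℝ} (hab : a ≤ b) :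
    0 ≤ intervalMoment K j a b :=
  intervalIntegral.integral_nonneg hab fun u _ => mul_nonneg (hj.pow_nonneg u) (hKnonneg u)

lemma intervalMoment_mono (hK : Integrable K) (hKnonneg : 0 ≤ K) {j : ℕ} (hj : Even j)
    {a b c d : ℝ} (hca : c ≤ a) (hab : a ≤ b) (hbd : b ≤ d) :
    intervalMoment K j a b ≤ intervalMoment K j c d :=
  intervalIntegral.integral_mono_interval hca hab hbd
    (Filter.Eventually.of_forall fun u => mul_nonneg (hj.pow_nonneg u) (hKnonneg u))
    (intervalIntegrable_pow_mul hK j c d)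

lemma intervalMoment_neg (hKeven : ∀ t, K t = K (-t)) (j : ℕ) (a b : ℝ) :
    intervalMoment K j (-b) (-a) = (-1) ^ j * intervalMoment K j a b := by
  rw [intervalMoment, intervalMoment, ← intervalIntegral.integral_const_mul,
    ← intervalIntegral.integral_comp_neg]
  congr 1 with u
  rw [← hKeven, neg_pow]
  ring

lemma momentDet_neg (hKeven : ∀ t, K t = K (-t)) (a b : ℝ) :
    momentDet K (-b) (-a) = momentDet K a b := by
  simp only [momentDet, intervalMoment_neg hKeven]
  ring

lemma intervalMoment_one_sq_le (hK : Integrable K) (hKnonneg : 0 ≤ K) {a b : ℝ} (hab : a ≤ b) :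
    intervalMoment K 1 a b ^ 2 ≤ intervalMoment K 0 a b * intervalMoment K 2 a b := by
  have hI := intervalIntegrable_pow_mul hK
  have hquad : ∀ x : ℝ, 0 ≤ intervalMoment K 0 a b * (x * x) + (-2 * intervalMoment K 1 a b) * x
      + intervalMoment K 2 a b := by
    intro x
    have hexp : ∫ u in a..b, (x - u) ^ 2 * K u = x * x * intervalMoment K 0 a b
        + -2 * x * intervalMoment K 1 a b + intervalMoment K 2 a b := by
      simp only [intervalMoment]
      rw [← intervalIntegral.integral_const_mul, ← intervalIntegral.integral_const_mul,
        ← intervalIntegral.integral_add ((hI 0 a b).const_mul _) ((hI 1 a b).const_mul _),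
        ← intervalIntegral.integral_add (((hI 0 a b).const_mul _).add ((hI 1 a b).const_mul _))
          (hI 2 a b)]
      congr 1 with u
      ring
    have hnonneg : 0 ≤ ∫ u in a..b, (x - u) ^ 2 * K u :=
      intervalIntegral.integral_nonneg hab fun u _ => mul_nonneg (sq_nonneg (x - u)) (hKnonneg u)
    linarith
  have := discrim_le_zero hquad
  rw [discrim] at this
  linarith

lemma momentDet_le_of_adjacent (hK : Integrable K) (hKnonneg : 0 ≤ K) {a b c : ℝ} (hab : a ≤ b)
    (hbc : b ≤ c) : momentDet K a b ≤ momentDet K a c ∧ momentDet K b c ≤ momentDet K a c := by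
  have hpsd : ∀ {a b : ℝ}, a ≤ b → 0 ≤ intervalMoment K 0 a b ∧ 0 ≤ intervalMoment K 2 a b ∧
      intervalMoment K 1 a b ^ 2 ≤ intervalMoment K 0 a b * intervalMoment K 2 a b :=
    fun hab => ⟨intervalMoment_nonneg hKnonneg Even.zero hab,
      intervalMoment_nonneg hKnonneg even_two hab, intervalMoment_one_sq_le hK hKnonneg hab⟩
  obtain ⟨p₀, p₂, hp⟩ := hpsd hab
  obtain ⟨q₀, q₂, hq⟩ := hpsd hbc
  simp only [momentDet, ← intervalMoment_add_adjacent hK _ a b c]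
  exact ⟨mul_sub_sq_le_add_of_psd p₀ p₂ hp q₀ q₂ hq,
    by simpa only [add_comm] using mul_sub_sq_le_add_of_psd q₀ q₂ hq p₀ p₂ hp⟩

lemma momentDet_mono (hK : Integrable K) (hKnonneg : 0 ≤ K) {a b c d : ℝ} (hca : c ≤ a)
    (hab : a ≤ b) (hbd : b ≤ d) : momentDet K a b ≤ momentDet K c d :=
  (momentDet_le_of_adjacent hK hKnonneg hca hab).2.trans
    (momentDet_le_of_adjacent hK hKnonneg (hca.trans hab) hbd).1

lemma intervalMoment_eq_of_le_neg_one (hK : Integrable K)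
    (hsupp : ∀ t ∉ Icc (-1 : ℝ) 1, K t = 0) (j : ℕ) {a : ℝ} (ha : a ≤ -1) (b : ℝ) :
    intervalMoment K j a b = intervalMoment K j (-1) b := by
  have hzero : intervalMoment K j a (-1) = 0 := by
    rw [intervalMoment, intervalIntegral.integral_of_le ha, integral_Ioc_eq_integral_Ioo]
    refine setIntegral_eq_zero_of_forall_eq_zero fun u hu => ?_
    rw [hsupp u fun hu' => hu'.1.not_gt hu.2, mul_zero]
  rw [← intervalMoment_add_adjacent hK j a (-1) b, hzero, zero_add]

lemma setIntegral_Icc_abs_pow_mul (hK : Integrable K) (hKeven : ∀ t, K t = K (-t)) (j : ℕ) :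
    ∫ u in Icc (-1 : ℝ) 1, |u| ^ j * K u = 2 * intervalMoment K j 0 1 := by
  have hI : ∀ a b : ℝ, IntervalIntegrable (fun u => |u| ^ j * K u) volume a b := fun a b =>
    hK.intervalIntegrable.continuousOn_mul (continuous_abs.pow j).continuousOn
  have hleft : ∫ u in (-1 : ℝ)..0, |u| ^ j * K u = ∫ u in (0 : ℝ)..1, |u| ^ j * K u := by
    simpa [← hKeven] using (intervalIntegral.integral_comp_neg (a := 0) (b := 1)
      (fun u => |u| ^ j * K u)).symm
  have hright : ∫ u in (0 : ℝ)..1, |u| ^ j * K u = intervalMoment K j 0 1 :=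
    intervalIntegral.integral_congr fun u hu => by
      rw [uIcc_of_le zero_le_one] at hu
      simp only [abs_of_nonneg hu.1]
  rw [integral_Icc_eq_integral_Ioc, ← intervalIntegral.integral_of_le (by norm_num),
    ← intervalIntegral.integral_add_adjacent_intervals (hI (-1) 0) (hI 0 1), hleft, hright, two_mul]

lemma setIntegral_Icc_kernel {h : ℝ} (hh : h ≠ 0) (j : ℕ) (t : ℝ) :
    ∫ z in Icc (0 : ℝ) 1, (t - z) ^ j * (K ((t - z) / h) / h)
      = h ^ j * intervalMoment K j ((t - 1) / h) (t / h) := by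
  rw [integral_Icc_eq_integral_Ioc, ← intervalIntegral.integral_of_le zero_le_one,
    intervalIntegral.integral_comp_sub_left (fun x => x ^ j * (K (x / h) / h)), sub_zero]
  have hscale : (fun x : ℝ => x ^ j * (K (x / h) / h))
      = fun x => (h ^ j / h) * ((x / h) ^ j * K (x / h)) := by
    funext x
    rw [div_pow, div_mul_eq_mul_div, mul_div_assoc]
    field_simp
  rw [hscale, intervalIntegral.integral_comp_div (fun u => (h ^ j / h) * (u ^ j * K u)) hh,
    intervalIntegral.integral_const_mul, smul_eq_mul, intervalMoment]
  field_simp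

end

lemma apply_zero_one_le_apply_window {F : ℝ → ℝ → ℝ}
    (hmono : ∀ {a b c d : ℝ}, c ≤ a → a ≤ b → b ≤ d → F a b ≤ F c d) (hneg : F (-1) 0 = F 0 1)
    {h t : ℝ} (hh : 0 < h) (hh2 : h ≤ 1 / 2) (ht : t ∈ Icc (0 : ℝ) 1) :
    F 0 1 ≤ F ((t - 1) / h) (t / h) := by
  have hlo : 0 ≤ t / h := div_nonneg ht.1 hh.le
  have hhi : (t - 1) / h ≤ 0 := div_nonpos_of_nonpos_of_nonneg (by linarith [ht.2]) hh.le
  rcases le_total t (1 / 2) with ht2 | ht2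
  · rw [← hneg]
    exact hmono (by rw [div_le_iff₀ hh]; linarith) (by norm_num) hlo
  · exact hmono hhi zero_le_one (by rw [le_div_iff₀ hh]; linarith)

theorem stmt_4_general (K : ℝ → ℝ)
    (hKnonneg : ∀ t, 0 ≤ K t)
    (hKsym : ∀ t, K t = K (-t))
    (hKsupp : ∀ t, t ∉ Set.Icc (-1 : ℝ) 1 → K t = 0)
    (hKint : ∫ t in Set.Icc (-1 : ℝ) 1, K t = 1)
    (h : ℝ) (hh : h ∈ Set.Ioo (0 : ℝ) (1 / 2)) :
    let w : ℕ → ℝ → ℝ := fun j t => ∫ z in Set.Icc (0 : ℝ) 1, (t - z) ^ j * (K ((t - z) / h) / h)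
    let κ : ℕ → ℝ := fun j => ∫ u in Set.Icc (-1 : ℝ) 1, |u| ^ j * K u
    IsLeast ((fun t => w 0 t) '' Set.Icc (0 : ℝ) 1) (1 / 2) ∧
    IsLeast ((fun t => w 0 t * w 2 t - (w 1 t) ^ 2) '' Set.Icc (0 : ℝ) 1)
      ((1 / 4) * (κ 2 - (κ 1) ^ 2) * h ^ 2) := by
  intro w κ
  obtain ⟨hh0, hh2⟩ := hh
  have hK : Integrable K :=
    (integrableOn_iff_integrable_of_support_subset fun t ht => by_contra (ht <| hKsupp t ·)).1
      (Integrable.of_integral_ne_zero (by rw [hKint]; exact one_ne_zero))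
  have hw : ∀ j t, w j t = h ^ j * intervalMoment K j ((t - 1) / h) (t / h) :=
    setIntegral_Icc_kernel hh0.ne'
  have hκ : ∀ j, κ j = 2 * intervalMoment K j 0 1 := setIntegral_Icc_abs_pow_mul hK hKsym
  have hmass : intervalMoment K 0 0 1 = 1 / 2 := by
    have := hκ 0
    simp only [κ, pow_zero, one_mul, hKint] at this
    linarith
  have hreflect : ∀ j, intervalMoment K j (-1) 0 = (-1) ^ j * intervalMoment K j 0 1 := by
    simpa using intervalMoment_neg hKsym (a := 0) (b := 1)
  -- at `t = 0` the window `[-1/h, 0]` carries exactly the left half of `K`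
  have hw_zero : ∀ j, w j 0 = h ^ j * ((-1) ^ j * intervalMoment K j 0 1) := fun j => by
    rw [hw, zero_div, intervalMoment_eq_of_le_neg_one hK hKsupp j
      (by rw [div_le_iff₀ hh0]; linarith), hreflect]
  have hdet : ∀ t, w 0 t * w 2 t - w 1 t ^ 2 = h ^ 2 * momentDet K ((t - 1) / h) (t / h) := by
    intro t
    simp only [hw, momentDet]
    ring
  refine ⟨⟨⟨0, ⟨le_rfl, zero_le_one⟩, by simp [hw_zero, hmass]⟩, ?_⟩,
    ⟨⟨0, ⟨le_rfl, zero_le_one⟩, by simp only [hw_zero, hκ, hmass]; ring⟩, ?_⟩⟩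
  · rintro _ ⟨t, ht, rfl⟩
    dsimp only
    rw [← hmass, hw, pow_zero, one_mul]
    refine apply_zero_one_le_apply_window (F := intervalMoment K 0)
      (intervalMoment_mono hK hKnonneg Even.zero) ?_ hh0 hh2.le ht
    simpa using hreflect 0
  · rintro _ ⟨t, ht, rfl⟩
    dsimp only
    rw [hdet, hκ, hκ, show (1 / 4) * (2 * intervalMoment K 2 0 1 - (2 * intervalMoment K 1 0 1) ^ 2)
      * h ^ 2 = h ^ 2 * momentDet K 0 1 by rw [momentDet, hmass]; ring]
    exact mul_le_mul_of_nonneg_left (apply_zero_one_le_apply_window (momentDet_mono hK hKnonneg)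
      (by simpa using momentDet_neg hKsym 0 1) hh0 hh2.le ht) (sq_nonneg h)

/-- `inf_{t∈[0,1]} w₀(t) = 1/2` and
`inf_{t∈[0,1]} (w₀(t)w₂(t) - w₁(t)²) = (1/4)(κ₂ - κ₁²)h²`, where the infima are
attained (stated via `IsLeast`). -/
theorem stmt_4 (K : ℝ → ℝ) (L : ℝ) (hL : 1 ≤ L)
    (hKlip : ∀ x y, |K x - K y| ≤ L * |x - y|)
    (hKnonneg : ∀ t, 0 ≤ K t)
    (hKsym : ∀ t, K t = K (-t))
    (hKsupp : ∀ t, t ∉ Set.Icc (-1 : ℝ) 1 → K t = 0)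
    (hKint : ∫ t in Set.Icc (-1 : ℝ) 1, K t = 1)
    (hK1 : K 1 = 0) (hKm1 : K (-1) = 0)
    (h : ℝ) (hh : h ∈ Set.Ioo (0 : ℝ) (1 / 2)) :
    let w : ℕ → ℝ → ℝ := fun j t => ∫ z in Set.Icc (0 : ℝ) 1, (t - z) ^ j * (K ((t - z) / h) / h)
    let κ : ℕ → ℝ := fun j => ∫ u in Set.Icc (-1 : ℝ) 1, |u| ^ j * K u
    IsLeast ((fun t => w 0 t) '' Set.Icc (0 : ℝ) 1) (1 / 2) ∧
    IsLeast ((fun t => w 0 t * w 2 t - (w 1 t) ^ 2) '' Set.Icc (0 : ℝ) 1)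
      ((1 / 4) * (κ 2 - (κ 1) ^ 2) * h ^ 2) :=
  stmt_4_general K hKnonneg hKsym hKsupp hKint h hh
end

section
/- Let K be a kernel as above, α ∈ [0,1], and define g(α) = κ₀(α)κ₂(α) − κ₁(α)², where κ_j(α) = ∫_{-1}^{α} t^j K(t) dt. Then g is nondecreasing on [0,1]; specifically g'(α) = K(α)·(α²κ₀(α) + κ₂(α) − 2ακ₁(α)) = K(α)·∫_{-1}^{α}(α−t)²K(t)dt ≥ 0. -/
open MeasureTheory intervalIntegral

section TruncatedMoments

variable {K : ℝ → ℝ} (hK : Continuous K)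
include hK

theorem integral_sq_sub_mul_eq (a α : ℝ) :
    ∫ t in a..α, (α - t) ^ 2 * K t
      = α ^ 2 * (∫ t in a..α, K t) + (∫ t in a..α, t ^ 2 * K t)
        - 2 * α * (∫ t in a..α, t * K t) := by
  have hK0 : IntervalIntegrable K volume a α := hK.intervalIntegrable _ _
  have hK1 : IntervalIntegrable (fun t => t * K t) volume a α :=
    (continuous_id.mul hK).intervalIntegrable _ _
  have hK2 : IntervalIntegrable (fun t => t ^ 2 * K t) volume a α :=
    ((continuous_pow 2).mul hK).intervalIntegrable _ _
  calc ∫ t in a..α, (α - t) ^ 2 * K t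
      = ∫ t in a..α, (α ^ 2 * K t + t ^ 2 * K t - 2 * α * (t * K t)) :=
        integral_congr fun t _ => by ring
    _ = _ := by
      rw [integral_sub ((hK0.const_mul _).add hK2) (hK1.const_mul _), integral_add
        (hK0.const_mul _) hK2, intervalIntegral.integral_const_mul,
        intervalIntegral.integral_const_mul]

theorem hasDerivAt_truncatedMoment_det (a α : ℝ) :
    HasDerivAt (fun x => (∫ t in a..x, K t) * (∫ t in a..x, t ^ 2 * K t)
        - (∫ t in a..x, t * K t) ^ 2)
      (K α * ∫ t in a..α, (α - t) ^ 2 * K t) α := by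
  have hκ₀ : HasDerivAt (fun x => ∫ t in a..x, K t) (K α) α :=
    (hK.integral_hasStrictDerivAt a α).hasDerivAt
  have hκ₁ : HasDerivAt (fun x => ∫ t in a..x, t * K t) (α * K α) α :=
    ((continuous_id.mul hK).integral_hasStrictDerivAt a α).hasDerivAt
  have hκ₂ : HasDerivAt (fun x => ∫ t in a..x, t ^ 2 * K t) (α ^ 2 * K α) α :=
    (((continuous_pow 2).mul hK).integral_hasStrictDerivAt a α).hasDerivAt
  refine ((hκ₀.mul hκ₂).sub (hκ₁.pow 2)).congr_deriv ?_
  rw [integral_sq_sub_mul_eq hK]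
  ring

theorem monotoneOn_truncatedMoment_det (hK₀ : ∀ t, 0 ≤ K t) (a : ℝ) :
    MonotoneOn (fun x => (∫ t in a..x, K t) * (∫ t in a..x, t ^ 2 * K t)
        - (∫ t in a..x, t * K t) ^ 2) (Set.Ici a) := by
  refine monotoneOn_of_hasDerivWithinAt_nonneg (convex_Ici a)
    (fun x _ => (hasDerivAt_truncatedMoment_det hK a x).continuousAt.continuousWithinAt)
    (fun x _ => (hasDerivAt_truncatedMoment_det hK a x).hasDerivWithinAt) fun x hx => ?_
  have hax : a ≤ x := interior_subset (s := Set.Ici a) hx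
  exact mul_nonneg (hK₀ x)
    (integral_nonneg hax fun t _ => mul_nonneg (sq_nonneg _) (hK₀ t))

end TruncatedMoments

theorem stmt_5_general (K : ℝ → ℝ) (L : ℝ)
    (hKlip : ∀ x y, |K x - K y| ≤ L * |x - y|)
    (hKnonneg : ∀ t, 0 ≤ K t) :
    let g : ℝ → ℝ := fun α =>
      (∫ t in (-1 : ℝ)..α, K t) * (∫ t in (-1 : ℝ)..α, t ^ 2 * K t)
        - (∫ t in (-1 : ℝ)..α, t * K t) ^ 2
    MonotoneOn g (Set.Icc (0 : ℝ) 1) ∧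
    ∀ α ∈ Set.Icc (0 : ℝ) 1,
      HasDerivAt g (K α * ∫ t in (-1 : ℝ)..α, (α - t) ^ 2 * K t) α ∧
      K α * (α ^ 2 * (∫ t in (-1 : ℝ)..α, K t) + (∫ t in (-1 : ℝ)..α, t ^ 2 * K t)
          - 2 * α * (∫ t in (-1 : ℝ)..α, t * K t))
        = K α * ∫ t in (-1 : ℝ)..α, (α - t) ^ 2 * K t ∧
      0 ≤ K α * ∫ t in (-1 : ℝ)..α, (α - t) ^ 2 * K t := by
  intro g
  have hK : Continuous K :=
    (LipschitzWith.of_dist_le' fun x y => by simpa only [Real.dist_eq] using hKlip x y).continuous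
  have hIcc : Set.Icc (0 : ℝ) 1 ⊆ Set.Ici (-1) := fun α hα => by
    simp only [Set.mem_Ici]; linarith [hα.1]
  refine ⟨(monotoneOn_truncatedMoment_det hK hKnonneg (-1)).mono hIcc, fun α hα => ⟨?_, ?_, ?_⟩⟩
  · exact hasDerivAt_truncatedMoment_det hK (-1) α
  · rw [integral_sq_sub_mul_eq hK]
  · exact mul_nonneg (hKnonneg α)
      (integral_nonneg (hIcc hα) fun t _ => mul_nonneg (sq_nonneg _) (hKnonneg t))

/-- With `κ_j(α) = ∫_{-1}^{α} t^j K(t) dt`, the function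
`g(α) = κ₀(α)κ₂(α) − κ₁(α)²` is nondecreasing on `[0,1]` with derivative
`g'(α) = K(α)·∫_{-1}^{α}(α−t)²K(t)dt`, which equals
`K(α)·(α²κ₀(α) + κ₂(α) − 2ακ₁(α)) ≥ 0`. -/
theorem stmt_5 (K : ℝ → ℝ) (L : ℝ) (hL : 1 ≤ L)
    (hKlip : ∀ x y, |K x - K y| ≤ L * |x - y|)
    (hKnonneg : ∀ t, 0 ≤ K t)
    (hKsym : ∀ t, K t = K (-t))
    (hKsupp : ∀ t, t ∉ Set.Icc (-1 : ℝ) 1 → K t = 0)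
    (hKint : ∫ t in Set.Icc (-1 : ℝ) 1, K t = 1)
    (hK1 : K 1 = 0) (hKm1 : K (-1) = 0) :
    let g : ℝ → ℝ := fun α =>
      (∫ t in (-1 : ℝ)..α, K t) * (∫ t in (-1 : ℝ)..α, t ^ 2 * K t)
        - (∫ t in (-1 : ℝ)..α, t * K t) ^ 2
    MonotoneOn g (Set.Icc (0 : ℝ) 1) ∧
    ∀ α ∈ Set.Icc (0 : ℝ) 1,
      HasDerivAt g (K α * ∫ t in (-1 : ℝ)..α, (α - t) ^ 2 * K t) α ∧
      K α * (α ^ 2 * (∫ t in (-1 : ℝ)..α, K t) + (∫ t in (-1 : ℝ)..α, t ^ 2 * K t)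
          - 2 * α * (∫ t in (-1 : ℝ)..α, t * K t))
        = K α * ∫ t in (-1 : ℝ)..α, (α - t) ^ 2 * K t ∧
      0 ≤ K α * ∫ t in (-1 : ℝ)..α, (α - t) ^ 2 * K t :=
  stmt_5_general K L hKlip hKnonneg
end

section
/- In the setting of Lemma 2 with δₙ ≤ c*·h and h < 1/2, for j = 0,1,2 and all t₁, t₂ ∈ [0,1]: |w_{nj}(t₂) − w_{nj}(t₁)| ≤ 18 L h^{j−1} |t₂ − t₁|. -/
/-!
Write `w_{nj}(t) = Σᵢ f(t - zᵢ) Δzᵢ` with `f(u) = uʲ K(u/h)/h`. The function `f` vanishes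
outside `[-h, h]` and, on pairs with one point inside `[-h, h]`, is Lipschitz with constant
`(1 + j) L h^{j-2}` (product rule, with `|K| ≤ L` on `[-1, 1]` because `K(±1) = 0`). Hence only
the nodes within `h` of `t₁` or `t₂` contribute to `w_{nj}(t₂) - w_{nj}(t₁)`, and their spacings
add up to at most `2 (2h + δₙ) ≤ 6h`.
-/

open MeasureTheory Finset

lemma Finset.sum_Icc_sub_pred {M : Type*} [AddCommGroup M] (f : ℕ → M) {p q : ℕ}
    (hp : 1 ≤ p) (hpq : p ≤ q) :
    ∑ i ∈ Icc p q, (f i - f (i - 1)) = f q - f (p - 1) := by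
  obtain ⟨m, rfl⟩ : ∃ m, p = m + 1 := ⟨p - 1, by omega⟩
  rw [← Ico_add_one_right_eq_Icc, ← sum_Ico_add' (fun i ↦ f i - f (i - 1)) m q 1]
  simpa using sum_Ico_sub f (show m ≤ q by omega)

section Spacings

variable {z : ℕ → ℝ} {n : ℕ} {δ h : ℝ}

def spacingSum (f : ℝ → ℝ) (z : ℕ → ℝ) (n : ℕ) (t : ℝ) : ℝ :=
  ∑ i ∈ Icc 1 n, f (t - z i) * (z i - z (i - 1))

lemma spacing_nonneg (hzmono : ∀ i ≤ n, z i ≤ z (i + 1)) {i : ℕ} (hi₁ : 1 ≤ i)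
    (hi : i ≤ n + 1) : 0 ≤ z i - z (i - 1) := by
  have := hzmono (i - 1) (by omega)
  rw [Nat.sub_add_cancel hi₁] at this
  linarith

lemma sum_spacing_window_le (hzmono : ∀ i ≤ n, z i ≤ z (i + 1))
    (hmesh : ∀ i, 1 ≤ i → i ≤ n → z i - z (i - 1) ≤ δ) (hh : 0 ≤ h) (hδ : 0 ≤ δ) (t : ℝ) :
    ∑ i ∈ (Icc 1 n).filter (fun i ↦ |t - z i| ≤ h), (z i - z (i - 1)) ≤ 2 * h + δ := by
  set A := (Icc 1 n).filter (fun i ↦ |t - z i| ≤ h)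
  rcases A.eq_empty_or_nonempty with hA | hA
  · rw [hA, sum_empty]
    positivity
  set p := A.min' hA
  set q := A.max' hA
  obtain ⟨hp, hpt⟩ := mem_filter.mp (A.min'_mem hA)
  obtain ⟨hq, hqt⟩ := mem_filter.mp (A.max'_mem hA)
  rw [mem_Icc] at hp hq
  rw [abs_le] at hpt hqt
  calc ∑ i ∈ A, (z i - z (i - 1))
      ≤ ∑ i ∈ Icc p q, (z i - z (i - 1)) :=
        sum_le_sum_of_subset_of_nonneg (fun i hi ↦ mem_Icc.mpr ⟨A.min'_le i hi, A.le_max' i hi⟩)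
          fun i hi _ ↦ spacing_nonneg hzmono (by simp at hi; omega) (by simp at hi; omega)
    _ = (z q - z p) + (z p - z (p - 1)) := by
        rw [sum_Icc_sub_pred z hp.1 (A.min'_le q (A.max'_mem hA))]
        ring
    _ ≤ 2 * h + δ := by
        linarith [hmesh p hp.1 hp.2]

lemma abs_spacingSum_sub_le {f : ℝ → ℝ} {C : ℝ} (hC : 0 ≤ C)
    (hf_zero : ∀ u, h < |u| → f u = 0) (hf_lip : ∀ u v, |u| ≤ h → |f u - f v| ≤ C * |u - v|)
    (hzmono : ∀ i ≤ n, z i ≤ z (i + 1)) (hmesh : ∀ i, 1 ≤ i → i ≤ n → z i - z (i - 1) ≤ δ)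
    (hh : 0 ≤ h) (hδ : 0 ≤ δ) (t₁ t₂ : ℝ) :
    |spacingSum f z n t₂ - spacingSum f z n t₁| ≤ C * |t₂ - t₁| * (2 * (2 * h + δ)) := by
  set Δ : ℕ → ℝ := fun i ↦ z i - z (i - 1)
  set d : ℕ → ℝ := fun i ↦ (f (t₂ - z i) - f (t₁ - z i)) * Δ i
  set A := (Icc 1 n).filter (fun i ↦ |t₂ - z i| ≤ h ∨ |t₁ - z i| ≤ h)
  have hΔ : ∀ i ∈ Icc 1 n, 0 ≤ Δ i := fun i hi ↦
    spacing_nonneg hzmono (mem_Icc.mp hi).1 (by have := (mem_Icc.mp hi).2; omega)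
  have hdiff : spacingSum f z n t₂ - spacingSum f z n t₁ = ∑ i ∈ A, d i := by
    rw [spacingSum, spacingSum, ← sum_sub_distrib, sum_filter_of_ne]
    · exact sum_congr rfl fun i _ ↦ by ring
    intro i _ hne
    contrapose! hne
    simp [d, hf_zero _ hne.1, hf_zero _ hne.2]
  have hd : ∀ i ∈ A, |d i| ≤ C * |t₂ - t₁| * Δ i := by
    intro i hi
    obtain ⟨hi, hwin⟩ := mem_filter.mp hi
    have hlip : |f (t₂ - z i) - f (t₁ - z i)| ≤ C * |t₂ - t₁| := by
      rcases hwin with hwin | hwin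
      · simpa using hf_lip _ (t₁ - z i) hwin
      · simpa [abs_sub_comm] using hf_lip _ (t₂ - z i) hwin
    rw [abs_mul, abs_of_nonneg (hΔ i hi)]
    exact mul_le_mul_of_nonneg_right hlip (hΔ i hi)
  have hwindows : ∑ i ∈ A, Δ i ≤ 2 * (2 * h + δ) := by
    calc ∑ i ∈ A, Δ i
        ≤ ∑ i ∈ (Icc 1 n).filter (fun i ↦ |t₂ - z i| ≤ h), Δ i
          + ∑ i ∈ (Icc 1 n).filter (fun i ↦ |t₁ - z i| ≤ h), Δ i := by
          rw [show A = _ from filter_or _ _ _, ← sum_union_inter]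
          exact le_add_of_nonneg_right <| sum_nonneg fun i hi ↦
            hΔ i (mem_filter.mp (mem_inter.mp hi).1).1
      _ ≤ 2 * (2 * h + δ) := by
          linarith [sum_spacing_window_le hzmono hmesh hh hδ t₂,
            sum_spacing_window_le hzmono hmesh hh hδ t₁]
  calc |spacingSum f z n t₂ - spacingSum f z n t₁|
      ≤ ∑ i ∈ A, C * |t₂ - t₁| * Δ i := hdiff ▸ (abs_sum_le_sum_abs _ _).trans (sum_le_sum hd)
    _ = C * |t₂ - t₁| * ∑ i ∈ A, Δ i := (mul_sum _ _ _).symm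
    _ ≤ C * |t₂ - t₁| * (2 * (2 * h + δ)) := by gcongr

end Spacings

section Kernel

variable {K : ℝ → ℝ} {L h : ℝ}

/-- The summand `uʲ K_h(u)` of `w_{nj}`, where `K_h(u) = K(u/h)/h`. -/
noncomputable def kernelWeight (K : ℝ → ℝ) (h : ℝ) (j : ℕ) (u : ℝ) : ℝ :=
  u ^ j * (K (u / h) / h)

lemma abs_le_of_lipschitz_of_vanish_at_pm_one (hL : 0 ≤ L)
    (hKlip : ∀ x y, |K x - K y| ≤ L * |x - y|) (hK1 : K 1 = 0) (hKm1 : K (-1) = 0)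
    {x : ℝ} (hx : |x| ≤ 1) : |K x| ≤ L := by
  rw [abs_le] at hx
  rcases le_total 0 x with hx0 | hx0
  · calc |K x| = |K x - K 1| := by rw [hK1, sub_zero]
      _ ≤ L * |x - 1| := hKlip x 1
      _ ≤ L * 1 := by gcongr; rw [abs_le]; constructor <;> linarith
      _ = L := mul_one L
  · calc |K x| = |K x - K (-1)| := by rw [hKm1, sub_zero]
      _ ≤ L * |x - -1| := hKlip x (-1)
      _ ≤ L * 1 := by gcongr; rw [abs_le]; constructor <;> linarith
      _ = L := mul_one L

lemma kernelWeight_eq_zero (hKsupp : ∀ t, t ∉ Set.Icc (-1 : ℝ) 1 → K t = 0) (hh : 0 < h)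
    (j : ℕ) {u : ℝ} (hu : h < |u|) : kernelWeight K h j u = 0 := by
  have : K (u / h) = 0 := by
    refine hKsupp _ fun hmem ↦ ?_
    have := abs_le.mpr hmem
    rw [abs_div, abs_of_pos hh, div_le_one hh] at this
    linarith
  simp [kernelWeight, this]

lemma abs_kernelWeight_sub_le (hL : 0 ≤ L) (hKlip : ∀ x y, |K x - K y| ≤ L * |x - y|)
    (hK1 : K 1 = 0) (hKm1 : K (-1) = 0) (hKsupp : ∀ t, t ∉ Set.Icc (-1 : ℝ) 1 → K t = 0)
    (hh : 0 < h) (j : ℕ) {u : ℝ} (hu : |u| ≤ h) (v : ℝ) :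
    |kernelWeight K h j u - kernelWeight K h j v| ≤ (1 + j) * L * h ^ ((j : ℤ) - 2) * |u - v| := by
  have hKdiff : |K (u / h) - K (v / h)| ≤ L * |u - v| / h := by
    have := hKlip (u / h) (v / h)
    rwa [← sub_div, abs_div, abs_of_pos hh, ← mul_div_assoc] at this
  have hpow : |u ^ j - v ^ j| * |K (v / h)| ≤ j * h ^ (j - 1) * |u - v| * L := by
    by_cases hv : |v| ≤ h
    · have hKv : |K (v / h)| ≤ L := abs_le_of_lipschitz_of_vanish_at_pm_one hL hKlip hK1 hKm1
        (by rwa [abs_div, abs_of_pos hh, div_le_one hh])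
      have hmax : max |u| |v| ^ (j - 1) ≤ h ^ (j - 1) := by gcongr; exact max_le hu hv
      calc |u ^ j - v ^ j| * |K (v / h)| ≤ (|u - v| * j * max |u| |v| ^ (j - 1)) * L :=
            mul_le_mul (abs_pow_sub_pow_le u v j) hKv (abs_nonneg _) (by positivity)
        _ ≤ (|u - v| * j * h ^ (j - 1)) * L := by gcongr
        _ = j * h ^ (j - 1) * |u - v| * L := by ring
    · have hKv : K (v / h) = 0 := by
        simpa [kernelWeight, hh.ne'] using kernelWeight_eq_zero hKsupp hh 0 (not_le.mp hv)
      rw [hKv, abs_zero, mul_zero]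
      positivity
  have hsplit : kernelWeight K h j u - kernelWeight K h j v
      = (u ^ j * (K (u / h) - K (v / h)) + (u ^ j - v ^ j) * K (v / h)) / h := by
    simp only [kernelWeight]
    ring
  have hpow_j : h ^ j = h ^ ((j : ℤ) - 2) * h * h := by
    rw [← zpow_add_one₀ hh.ne', ← zpow_add_one₀ hh.ne', ← zpow_natCast]
    ring_nf
  have hpow_pred : (j : ℝ) * h ^ (j - 1) = j * h ^ ((j : ℤ) - 2) * h := by
    rcases Nat.eq_zero_or_pos j with rfl | hj
    · simp
    rw [mul_assoc, ← zpow_add_one₀ hh.ne', ← zpow_natCast, Nat.cast_sub hj]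
    ring_nf
  rw [hsplit, abs_div, abs_of_pos hh, div_le_iff₀ hh]
  calc |u ^ j * (K (u / h) - K (v / h)) + (u ^ j - v ^ j) * K (v / h)|
      ≤ |u| ^ j * |K (u / h) - K (v / h)| + |u ^ j - v ^ j| * |K (v / h)| :=
        (abs_add_le _ _).trans_eq (by rw [abs_mul, abs_mul, abs_pow])
    _ ≤ h ^ j * (L * |u - v| / h) + j * h ^ (j - 1) * |u - v| * L := by gcongr
    _ = (1 + j) * L * h ^ ((j : ℤ) - 2) * |u - v| * h := by
        rw [hpow_j, hpow_pred]
        field_simp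

end Kernel

lemma mesh_constant_le_one {κ1 κ2 L : ℝ} (hκ1 : 0 ≤ κ1) (hκ2 : 0 ≤ κ2) (hL : 1 ≤ L) :
    (κ2 - κ1 ^ 2) / (96 * L * (6 * L + κ2 + κ1 / 2)) ≤ 1 := by
  rw [div_le_one (by positivity)]
  nlinarith [mul_nonneg (sub_nonneg.mpr hL) hκ2, mul_nonneg (sub_nonneg.mpr hL) hκ1]

theorem stmt_10_general (K : ℝ → ℝ) (L : ℝ) (hL : 1 ≤ L)
    (hKlip : ∀ x y, |K x - K y| ≤ L * |x - y|)
    (hKnonneg : ∀ t, 0 ≤ K t)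
    (hKsupp : ∀ t, t ∉ Set.Icc (-1 : ℝ) 1 → K t = 0)
    (hK1 : K 1 = 0) (hKm1 : K (-1) = 0)
    (h : ℝ) (hh : h ∈ Set.Ioo (0 : ℝ) (1 / 2))
    (κ1 κ2 : ℝ)
    (hκ1 : κ1 = ∫ u in Set.Icc (-1 : ℝ) 1, |u| * K u)
    (hκ2 : κ2 = ∫ u in Set.Icc (-1 : ℝ) 1, u ^ 2 * K u)
    (n : ℕ) (z : ℕ → ℝ)
    (hzmono : ∀ i ≤ n, z i ≤ z (i + 1))
    (hmesh : ∀ i, 1 ≤ i → i ≤ n + 1 →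
      z i - z (i - 1) ≤ (κ2 - κ1 ^ 2) / (96 * L * (6 * L + κ2 + κ1 / 2)) * h) :
    let w : ℕ → ℝ → ℝ := fun j t =>
      ∑ i ∈ Finset.Icc 1 n, (t - z i) ^ j * (K ((t - z i) / h) / h) * (z i - z (i - 1))
    ∀ j ≤ 2, ∀ t₁ ∈ Set.Icc (0 : ℝ) 1, ∀ t₂ ∈ Set.Icc (0 : ℝ) 1,
      |w j t₂ - w j t₁| ≤ 18 * L * h ^ ((j : ℤ) - 1) * |t₂ - t₁| := by
  intro w j hj t₁ _ t₂ _
  have hh0 : 0 < h := hh.1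
  have hκ1_nonneg : 0 ≤ κ1 := hκ1 ▸ setIntegral_nonneg measurableSet_Icc fun u _ ↦
    mul_nonneg (abs_nonneg u) (hKnonneg u)
  have hκ2_nonneg : 0 ≤ κ2 := hκ2 ▸ setIntegral_nonneg measurableSet_Icc fun u _ ↦
    mul_nonneg (sq_nonneg u) (hKnonneg u)
  have hmesh_h : ∀ i, 1 ≤ i → i ≤ n → z i - z (i - 1) ≤ h := fun i hi₁ hi ↦
    (hmesh i hi₁ (by omega)).trans
      (mul_le_of_le_one_left hh0.le (mesh_constant_le_one hκ1_nonneg hκ2_nonneg hL))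
  have hbound := abs_spacingSum_sub_le (C := (1 + j) * L * h ^ ((j : ℤ) - 2)) (by positivity)
    (fun _ ↦ kernelWeight_eq_zero hKsupp hh0 j)
    (fun _ v hu ↦ abs_kernelWeight_sub_le (by linarith) hKlip hK1 hKm1 hKsupp hh0 j hu v)
    hzmono hmesh_h hh0.le hh0.le t₁ t₂
  calc |w j t₂ - w j t₁|
      ≤ (1 + j) * L * h ^ ((j : ℤ) - 2) * |t₂ - t₁| * (2 * (2 * h + h)) := hbound
    _ ≤ 3 * L * h ^ ((j : ℤ) - 2) * |t₂ - t₁| * (2 * (2 * h + h)) := by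
        gcongr
        linarith [show (j : ℝ) ≤ 2 by exact_mod_cast hj]
    _ = 18 * L * h ^ ((j : ℤ) - 1) * |t₂ - t₁| := by
        rw [show (j : ℤ) - 1 = (j : ℤ) - 2 + 1 by ring, zpow_add_one₀ hh0.ne']
        ring

/-- In the setting of Lemma 2 with mesh `δₙ ≤ c*·h` and `h < 1/2`, for `j = 0,1,2` and
all `t₁, t₂ ∈ [0,1]`: `|w_{nj}(t₂) − w_{nj}(t₁)| ≤ 18 L h^{j−1} |t₂ − t₁|`. -/
theorem stmt_10 (K : ℝ → ℝ) (L : ℝ) (hL : 1 ≤ L)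
    (hKlip : ∀ x y, |K x - K y| ≤ L * |x - y|)
    (hKnonneg : ∀ t, 0 ≤ K t)
    (hKsym : ∀ t, K t = K (-t))
    (hKsupp : ∀ t, t ∉ Set.Icc (-1 : ℝ) 1 → K t = 0)
    (hKint : ∫ t in Set.Icc (-1 : ℝ) 1, K t = 1)
    (hK1 : K 1 = 0) (hKm1 : K (-1) = 0)
    (h : ℝ) (hh : h ∈ Set.Ioo (0 : ℝ) (1 / 2))
    (κ1 κ2 : ℝ)
    (hκ1 : κ1 = ∫ u in Set.Icc (-1 : ℝ) 1, |u| * K u)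
    (hκ2 : κ2 = ∫ u in Set.Icc (-1 : ℝ) 1, u ^ 2 * K u)
    (n : ℕ) (z : ℕ → ℝ)
    (hz0 : z 0 = 0) (hzl : z (n + 1) = 1)
    (hzmono : ∀ i ≤ n, z i ≤ z (i + 1))
    (hmesh : ∀ i, 1 ≤ i → i ≤ n + 1 →
      z i - z (i - 1) ≤ (κ2 - κ1 ^ 2) / (96 * L * (6 * L + κ2 + κ1 / 2)) * h) :
    let w : ℕ → ℝ → ℝ := fun j t =>
      ∑ i ∈ Finset.Icc 1 n, (t - z i) ^ j * (K ((t - z i) / h) / h) * (z i - z (i - 1))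
    ∀ j ≤ 2, ∀ t₁ ∈ Set.Icc (0 : ℝ) 1, ∀ t₂ ∈ Set.Icc (0 : ℝ) 1,
      |w j t₂ - w j t₁| ≤ 18 * L * h ^ ((j : ℤ) - 1) * |t₂ - t₁| :=
  stmt_10_general K L hL hKlip hKnonneg hKsupp hK1 hKm1 h hh κ1 κ2 hκ1 hκ2 n z hzmono hmesh
end
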